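/- arXiv:1703.00811 — 3 statements merged into one kernel-verified Lean document; each statement's English description precedes it below -/
import Mathlib

section
/- Let L > 0, let κ₀ : [0,L] → ℝ be continuous, and let δ > 0 satisfy δ·sup_{σ}|κ₀(σ)| < 1. If u, v : [0,L] → ℝ are continuous functions taking values in [−δ, δ] whose weighted areas agree, i.e. ∫₀^L (u(σ) − κ₀(σ)·u(σ)²/2) dσ = ∫₀^L (v(σ) − κ₀(σ)·v(σ)²/2) dσ, then there exists a point σ₀ ∈ [0,L] with u(σ₀) = v(σ₀). -/
open Set MeasureTheory

/-- two normal graphs `u`, `v` over a reference curve of length `L` and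
curvature `κ0`, taking values in `[-δ, δ]` with `δ·sup|κ0| < 1`, whose weighted areas
`∫ (u - κ0·u²/2)` agree, must intersect. -/
theorem stmt_1 (L : ℝ) (hL : 0 < L) (κ0 u v : ℝ → ℝ) (δ C : ℝ) (hδ : 0 < δ)
    (hκcont : ContinuousOn κ0 (Icc 0 L))
    (hC : ∀ σ ∈ Icc (0:ℝ) L, |κ0 σ| ≤ C) (hδC : δ * C < 1)
    (hu : ContinuousOn u (Icc 0 L)) (hv : ContinuousOn v (Icc 0 L))
    (hurange : ∀ σ ∈ Icc (0:ℝ) L, u σ ∈ Icc (-δ) δ)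
    (hvrange : ∀ σ ∈ Icc (0:ℝ) L, v σ ∈ Icc (-δ) δ)
    (harea : (∫ σ in (0:ℝ)..L, (u σ - κ0 σ * (u σ)^2 / 2)) =
             (∫ σ in (0:ℝ)..L, (v σ - κ0 σ * (v σ)^2 / 2))) :
    ∃ σ0 ∈ Icc (0:ℝ) L, u σ0 = v σ0 := by
  set f : ℝ → ℝ := fun σ => (u σ - κ0 σ * (u σ)^2 / 2) - (v σ - κ0 σ * (v σ)^2 / 2) with hf
  have huIcc : uIcc (0:ℝ) L = Icc 0 L := uIcc_of_le hL.le
  have hfc : ContinuousOn f (Icc 0 L) := by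
    apply ContinuousOn.sub
    · exact hu.sub ((hκcont.mul ((hu.pow 2))).div_const 2)
    · exact hv.sub ((hκcont.mul ((hv.pow 2))).div_const 2)
  have hint : IntervalIntegrable f volume 0 L := by
    apply ContinuousOn.intervalIntegrable
    rwa [huIcc]
  have hintzero : (∫ σ in (0:ℝ)..L, f σ) = 0 := by
    have h1 : IntervalIntegrable (fun σ => u σ - κ0 σ * (u σ)^2 / 2) volume 0 L := by
      apply ContinuousOn.intervalIntegrable
      rw [huIcc]
      exact hu.sub ((hκcont.mul ((hu.pow 2))).div_const 2)
    have h2 : IntervalIntegrable (fun σ => v σ - κ0 σ * (v σ)^2 / 2) volume 0 L := by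
      apply ContinuousOn.intervalIntegrable
      rw [huIcc]
      exact hv.sub ((hκcont.mul ((hv.pow 2))).div_const 2)
    rw [hf]
    rw [intervalIntegral.integral_sub h1 h2, harea, sub_self]
  -- f has a zero on [0, L]
  have hzero : ∃ σ0 ∈ Icc (0:ℝ) L, f σ0 = 0 := by
    by_contra h
    push_neg at h
    rcases lt_trichotomy (f 0) 0 with h0 | h0 | h0
    · -- f < 0 everywhere, else IVT
      have hneg : ∀ σ ∈ Icc (0:ℝ) L, f σ < 0 := by
        intro σ hσ
        by_contra hge
        push_neg at hge
        have hsub : uIcc (0:ℝ) σ ⊆ Icc 0 L := by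
          rw [uIcc_of_le hσ.1]
          exact Icc_subset_Icc le_rfl hσ.2
        have : (0:ℝ) ∈ f '' uIcc 0 σ := by
          apply intermediate_value_uIcc (hfc.mono hsub)
          rw [mem_uIcc]; left; exact ⟨h0.le, hge⟩
        obtain ⟨x, hx, hfx⟩ := this
        exact h x (hsub hx) hfx
      have : (∫ σ in (0:ℝ)..L, f σ) < 0 := by
        have := intervalIntegral.intervalIntegral_pos_of_pos_on (f := fun σ => -f σ)
          hint.neg (fun x hx => by
            simpa using hneg x ⟨hx.1.le, hx.2.le⟩) hL
        rw [intervalIntegral.integral_neg] at this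
        linarith
      rw [hintzero] at this; exact absurd this (lt_irrefl 0)
    · exact h 0 ⟨le_rfl, hL.le⟩ h0
    · have hpos : ∀ σ ∈ Icc (0:ℝ) L, 0 < f σ := by
        intro σ hσ
        by_contra hge
        push_neg at hge
        have hsub : uIcc (0:ℝ) σ ⊆ Icc 0 L := by
          rw [uIcc_of_le hσ.1]
          exact Icc_subset_Icc le_rfl hσ.2
        have : (0:ℝ) ∈ f '' uIcc 0 σ := by
          apply intermediate_value_uIcc (hfc.mono hsub)
          rw [mem_uIcc]; right; exact ⟨hge, h0.le⟩
        obtain ⟨x, hx, hfx⟩ := this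
        exact h x (hsub hx) hfx
      have : 0 < (∫ σ in (0:ℝ)..L, f σ) :=
        intervalIntegral.intervalIntegral_pos_of_pos_on hint
          (fun x hx => hpos x ⟨hx.1.le, hx.2.le⟩) hL
      rw [hintzero] at this; exact absurd this (lt_irrefl 0)
  obtain ⟨σ0, hσ0, hfσ0⟩ := hzero
  refine ⟨σ0, hσ0, ?_⟩
  -- f σ0 = (u - v) * (1 - κ0 (u + v)/2)
  have hfact : f σ0 = (u σ0 - v σ0) * (1 - κ0 σ0 * (u σ0 + v σ0) / 2) := by
    rw [hf]; ring
  have hCpos : 0 ≤ C := le_trans (abs_nonneg _) (hC 0 ⟨le_rfl, hL.le⟩)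
  have hbound : |κ0 σ0 * (u σ0 + v σ0) / 2| < 1 := by
    have h1 := hC σ0 hσ0
    have h2 := hurange σ0 hσ0
    have h3 := hvrange σ0 hσ0
    have habs : |u σ0 + v σ0| ≤ 2 * δ := by
      calc |u σ0 + v σ0| ≤ |u σ0| + |v σ0| := abs_add_le _ _
        _ ≤ δ + δ := add_le_add (abs_le.mpr ⟨h2.1, h2.2⟩) (abs_le.mpr ⟨h3.1, h3.2⟩)
        _ = 2 * δ := by ring
    have key : |κ0 σ0 * (u σ0 + v σ0) / 2| ≤ C * (2 * δ) / 2 := by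
      rw [abs_div, abs_mul, abs_two]
      gcongr
    have : C * (2 * δ) / 2 = δ * C := by ring
    linarith
  have hpos2 : 0 < 1 - κ0 σ0 * (u σ0 + v σ0) / 2 := by
    have := abs_lt.mp hbound
    linarith [this.2]
  rw [hfact] at hfσ0
  have := mul_eq_zero.mp hfσ0
  rcases this with h | h
  · linarith [sub_eq_zero.mp h]
  · linarith
end

section
/- Let L > 0, let κ₀ : [0,L] → ℝ be continuous, and let δ > 0 satisfy δ·sup_{σ}|κ₀(σ)| < 1. If u, v : [0,L] → ℝ are continuously differentiable functions taking values in [−δ, δ] with ∫₀^L (u − κ₀u²/2) dσ = ∫₀^L (v − κ₀v²/2) dσ, then the difference w := u − v satisfies the Poincaré inequality ‖w‖_{L²(0,L)} ≤ L·‖w'‖_{L²(0,L)}. -/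
/-!
The area functional factorises on differences:
`(u - κ₀u²/2) - (v - κ₀v²/2) = (u - v)(1 - κ₀(u + v)/2)`, and the weight
`1 - κ₀(u + v)/2` is positive because `δ·sup|κ₀| < 1`. Equal areas thus make the continuous
function `w = u - v` have zero integral against a positive weight, so `w` vanishes somewhere.
From that zero, `|w| ≤ ∫|w'|` pointwise, and Cauchy–Schwarz gives `(∫|w'|)² ≤ L ∫ w'²`;
integrating `w² ≤ L ∫ w'²` over `[0, L]` yields the inequality.
-/

open Set MeasureTheory

theorem IsPreconnected.forall_pos_or_forall_neg {s : Set ℝ} {f : ℝ → ℝ} (hs : IsPreconnected s)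
    (hf : ContinuousOn f s) (h0 : ∀ x ∈ s, f x ≠ 0) :
    (∀ x ∈ s, 0 < f x) ∨ ∀ x ∈ s, f x < 0 := by
  by_contra! ⟨⟨x, hx, hfx⟩, ⟨y, hy, hfy⟩⟩
  obtain ⟨z, hz, hfz⟩ := hs.intermediate_value hx hy hf ⟨hfx, hfy⟩
  exact h0 z hz hfz

section Interval

variable {a b : ℝ} {f w w' : ℝ → ℝ}

theorem exists_eq_zero_of_intervalIntegral_eq_zero (hab : a < b) (hf : ContinuousOn f (Icc a b))
    (h : ∫ x in a..b, f x = 0) : ∃ x ∈ Icc a b, f x = 0 := by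
  by_contra! h0
  have hfi : IntervalIntegrable f volume a b := hf.intervalIntegrable_of_Icc hab.le
  rcases isPreconnected_Icc.forall_pos_or_forall_neg hf h0 with hpos | hneg
  · have := intervalIntegral.intervalIntegral_pos_of_pos_on hfi
      (fun x hx => hpos x (Ioo_subset_Icc_self hx)) hab
    linarith
  · have := intervalIntegral.intervalIntegral_pos_of_pos_on (f := fun x => -f x) hfi.neg
      (fun x hx => neg_pos.2 (hneg x (Ioo_subset_Icc_self hx))) hab
    rw [intervalIntegral.integral_neg] at this
    linarith

theorem sq_intervalIntegral_abs_le (hab : a ≤ b) (hf : ContinuousOn f (Icc a b)) :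
    (∫ x in a..b, |f x|) ^ 2 ≤ (b - a) * ∫ x in a..b, f x ^ 2 := by
  rcases hab.eq_or_lt with rfl | hab
  · simp
  set I := ∫ x in a..b, |f x|
  have habs : IntervalIntegrable (fun x => |f x|) volume a b :=
    hf.abs.intervalIntegrable_of_Icc hab.le
  have hsq : IntervalIntegrable (fun x => f x ^ 2) volume a b :=
    (hf.pow 2).intervalIntegrable_of_Icc hab.le
  -- Cauchy–Schwarz from `0 ≤ ∫ ((b - a)|f| - I)² = (b - a)((b - a) ∫ f² - I²)`.
  have hexpand : ∫ x in a..b, ((b - a) * |f x| - I) ^ 2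
      = (b - a) * ((b - a) * ∫ x in a..b, f x ^ 2) - (b - a) * I ^ 2 := by
    have hpt : ∀ x, ((b - a) * |f x| - I) ^ 2
        = (b - a) ^ 2 * f x ^ 2 - 2 * (b - a) * I * |f x| + I ^ 2 := by
      intro x; rw [← sq_abs (f x)]; ring
    simp_rw [hpt]
    rw [intervalIntegral.integral_add ((hsq.const_mul _).sub (habs.const_mul _))
        intervalIntegrable_const, intervalIntegral.integral_sub (hsq.const_mul _)
        (habs.const_mul _), intervalIntegral.integral_const_mul,
      intervalIntegral.integral_const_mul, intervalIntegral.integral_const, smul_eq_mul]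
    ring
  have hnonneg : 0 ≤ ∫ x in a..b, ((b - a) * |f x| - I) ^ 2 :=
    intervalIntegral.integral_nonneg hab.le fun x _ => sq_nonneg _
  rw [hexpand, ← mul_sub] at hnonneg
  exact sub_nonneg.1 (nonneg_of_mul_nonneg_right hnonneg (sub_pos.2 hab))

theorem abs_sub_le_intervalIntegral_abs_deriv
    (hw : ∀ x ∈ Icc a b, HasDerivWithinAt w (w' x) (Icc a b) x) (hw' : ContinuousOn w' (Icc a b))
    {x y : ℝ} (hx : x ∈ Icc a b) (hy : y ∈ Icc a b) :
    |w y - w x| ≤ ∫ t in a..b, |w' t| := by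
  wlog hxy : x ≤ y generalizing x y
  · rw [abs_sub_comm]; exact this hy hx (le_of_not_ge hxy)
  have hsub : Icc x y ⊆ Icc a b := Icc_subset_Icc hx.1 hy.2
  have hw'i : IntervalIntegrable w' volume x y := (hw'.mono hsub).intervalIntegrable_of_Icc hxy
  have hftc : ∫ t in x..y, w' t = w y - w x :=
    intervalIntegral.integral_eq_sub_of_hasDerivAt_of_le hxy
      (fun t ht => (hw t (hsub ht)).continuousWithinAt.mono hsub)
      (fun t ht => (hw t (hsub (Ioo_subset_Icc_self ht))).hasDerivAt
        (Icc_mem_nhds (hx.1.trans_lt ht.1) (ht.2.trans_le hy.2)))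
      hw'i
  calc |w y - w x| = |∫ t in x..y, w' t| := by rw [hftc]
    _ ≤ ∫ t in x..y, |w' t| := intervalIntegral.abs_integral_le_integral_abs hxy
    _ ≤ ∫ t in a..b, |w' t| :=
      intervalIntegral.integral_mono_interval hx.1 hxy hy.2 (ae_of_all _ fun t => abs_nonneg _)
        (hw'.abs.intervalIntegrable_of_Icc (hx.1.trans (hxy.trans hy.2)))

theorem sqrt_intervalIntegral_sq_le_of_eq_zero (hab : a ≤ b)
    (hw : ∀ x ∈ Icc a b, HasDerivWithinAt w (w' x) (Icc a b) x) (hw' : ContinuousOn w' (Icc a b))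
    {x₀ : ℝ} (hx₀ : x₀ ∈ Icc a b)
    (hwx₀ : w x₀ = 0) :
    √(∫ x in a..b, w x ^ 2) ≤ (b - a) * √(∫ x in a..b, w' x ^ 2) := by
  set I := ∫ t in a..b, |w' t|
  have hpt : ∀ x ∈ Icc a b, w x ^ 2 ≤ I ^ 2 := by
    intro x hx
    have := abs_sub_le_intervalIntegral_abs_deriv hw hw' hx₀ hx
    rw [hwx₀, sub_zero] at this
    exact sq_le_sq' (abs_le.1 this).1 (abs_le.1 this).2
  have hwc : ContinuousOn w (Icc a b) := fun x hx => (hw x hx).continuousWithinAt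
  have hint : ∫ x in a..b, w x ^ 2 ≤ (b - a) ^ 2 * ∫ x in a..b, w' x ^ 2 :=
    calc ∫ x in a..b, w x ^ 2 ≤ ∫ _ in a..b, I ^ 2 :=
          intervalIntegral.integral_mono_on hab ((hwc.pow 2).intervalIntegrable_of_Icc hab)
            intervalIntegrable_const hpt
      _ = (b - a) * I ^ 2 := by rw [intervalIntegral.integral_const, smul_eq_mul]
      _ ≤ (b - a) * ((b - a) * ∫ x in a..b, w' x ^ 2) :=
          mul_le_mul_of_nonneg_left (sq_intervalIntegral_abs_le hab hw') (sub_nonneg.2 hab)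
      _ = (b - a) ^ 2 * ∫ x in a..b, w' x ^ 2 := by ring
  calc √(∫ x in a..b, w x ^ 2) ≤ √((b - a) ^ 2 * ∫ x in a..b, w' x ^ 2) := Real.sqrt_le_sqrt hint
    _ = (b - a) * √(∫ x in a..b, w' x ^ 2) := by
      rw [Real.sqrt_mul (sq_nonneg _), Real.sqrt_sq (sub_nonneg.2 hab)]

end Interval

theorem area_weight_pos {k x y δ C : ℝ} (hk : |k| ≤ C) (hx : x ∈ Icc (-δ) δ)
    (hy : y ∈ Icc (-δ) δ) (hδC : δ * C < 1) : 0 < 1 - k * (x + y) / 2 := by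
  have hxy : |x + y| / 2 ≤ δ := by
    have := abs_add_le x y
    linarith [abs_le.2 hx, abs_le.2 hy]
  have : |k * (x + y) / 2| ≤ C * δ := by
    rw [mul_div_assoc, abs_mul, abs_div, abs_two]
    exact mul_le_mul hk hxy (by positivity) ((abs_nonneg k).trans hk)
  linarith [le_abs_self (k * (x + y) / 2)]

theorem area_sub_eq_mul_weight (k x y : ℝ) :
    (x - k * x ^ 2 / 2) - (y - k * y ^ 2 / 2) = (x - y) * (1 - k * (x + y) / 2) := by
  ring

theorem stmt_2_general (L : ℝ) (hL : 0 < L) (κ0 u v u' v' : ℝ → ℝ) (δ C : ℝ)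
    (hκcont : ContinuousOn κ0 (Icc 0 L))
    (hC : ∀ σ ∈ Icc (0:ℝ) L, |κ0 σ| ≤ C) (hδC : δ * C < 1)
    (hu : ∀ σ ∈ Icc (0:ℝ) L, HasDerivWithinAt u (u' σ) (Icc 0 L) σ)
    (hv : ∀ σ ∈ Icc (0:ℝ) L, HasDerivWithinAt v (v' σ) (Icc 0 L) σ)
    (hu' : ContinuousOn u' (Icc 0 L)) (hv' : ContinuousOn v' (Icc 0 L))
    (hurange : ∀ σ ∈ Icc (0:ℝ) L, u σ ∈ Icc (-δ) δ)
    (hvrange : ∀ σ ∈ Icc (0:ℝ) L, v σ ∈ Icc (-δ) δ)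
    (harea : (∫ σ in (0:ℝ)..L, (u σ - κ0 σ * (u σ)^2 / 2)) =
             (∫ σ in (0:ℝ)..L, (v σ - κ0 σ * (v σ)^2 / 2))) :
    Real.sqrt (∫ σ in (0:ℝ)..L, (u σ - v σ)^2) ≤
      L * Real.sqrt (∫ σ in (0:ℝ)..L, (u' σ - v' σ)^2) := by
  have hu_cont : ContinuousOn u (Icc 0 L) := fun σ hσ => (hu σ hσ).continuousWithinAt
  have hv_cont : ContinuousOn v (Icc 0 L) := fun σ hσ => (hv σ hσ).continuousWithinAt
  have harea_int : ∀ f : ℝ → ℝ, ContinuousOn f (Icc 0 L) →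
      IntervalIntegrable (fun σ => f σ - κ0 σ * f σ ^ 2 / 2) volume 0 L := fun f hf =>
    (hf.sub ((hκcont.mul (hf.pow 2)).div_const 2)).intervalIntegrable_of_Icc hL.le
  have hweighted : ∫ σ in (0:ℝ)..L, (u σ - v σ) * (1 - κ0 σ * (u σ + v σ) / 2) = 0 := by
    simp_rw [← area_sub_eq_mul_weight]
    rw [intervalIntegral.integral_sub (harea_int u hu_cont) (harea_int v hv_cont), harea,
      sub_self]
  obtain ⟨σ₀, hσ₀, hzero⟩ := exists_eq_zero_of_intervalIntegral_eq_zero hL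
    ((hu_cont.sub hv_cont).mul (continuousOn_const.sub
      ((hκcont.mul (hu_cont.add hv_cont)).div_const 2))) hweighted
  have hσ₀_eq : u σ₀ - v σ₀ = 0 := (mul_eq_zero.1 hzero).resolve_right
    (area_weight_pos (hC σ₀ hσ₀) (hurange σ₀ hσ₀) (hvrange σ₀ hσ₀) hδC).ne'
  simpa using sqrt_intervalIntegral_sq_le_of_eq_zero hL.le (fun σ hσ => (hu σ hσ).sub (hv σ hσ))
    (hu'.sub hv') hσ₀ hσ₀_eq

/-- for two C¹ normal graphs `u`, `v` over a reference curve of length `L`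
and curvature `κ0`, taking values in `[-δ, δ]` with `δ·sup|κ0| < 1` and enclosing the same
weighted area, the difference `w = u - v` satisfies the Poincaré inequality
`‖w‖_{L²(0,L)} ≤ L·‖w'‖_{L²(0,L)}`. -/
theorem stmt_2 (L : ℝ) (hL : 0 < L) (κ0 u v u' v' : ℝ → ℝ) (δ C : ℝ) (hδ : 0 < δ)
    (hκcont : ContinuousOn κ0 (Icc 0 L))
    (hC : ∀ σ ∈ Icc (0:ℝ) L, |κ0 σ| ≤ C) (hδC : δ * C < 1)
    (hu : ∀ σ ∈ Icc (0:ℝ) L, HasDerivWithinAt u (u' σ) (Icc 0 L) σ)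
    (hv : ∀ σ ∈ Icc (0:ℝ) L, HasDerivWithinAt v (v' σ) (Icc 0 L) σ)
    (hu' : ContinuousOn u' (Icc 0 L)) (hv' : ContinuousOn v' (Icc 0 L))
    (hurange : ∀ σ ∈ Icc (0:ℝ) L, u σ ∈ Icc (-δ) δ)
    (hvrange : ∀ σ ∈ Icc (0:ℝ) L, v σ ∈ Icc (-δ) δ)
    (harea : (∫ σ in (0:ℝ)..L, (u σ - κ0 σ * (u σ)^2 / 2)) =
             (∫ σ in (0:ℝ)..L, (v σ - κ0 σ * (v σ)^2 / 2))) :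
    Real.sqrt (∫ σ in (0:ℝ)..L, (u σ - v σ)^2) ≤
      L * Real.sqrt (∫ σ in (0:ℝ)..L, (u' σ - v' σ)^2) :=
  stmt_2_general L hL κ0 u v u' v' δ C hκcont hC hδC hu hv hu' hv' hurange hvrange harea
end

section
/- Let L > 0, let κ₀ : ℝ/Lℤ → ℝ be a continuous L-periodic function with ∫₀^L κ₀(σ) dσ = 2π, and let u : ℝ/Lℤ → ℝ be a twice continuously differentiable L-periodic function with sup_σ |u(σ)·κ₀(σ)| < 1. Then, with S(u) := √(u_σ² + (1−uκ₀)²) and κ(u) := S(u)^{−3}·[(1−uκ₀)·u_{σσ} + 2κ₀·u_σ² + (κ₀)_σ·u_σ·u + κ₀·(1−uκ₀)²], one has the Gauss–Bonnet identity ∫₀^L κ(u)(σ)·S(u)(σ) dσ = 2π. -/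
open Set MeasureTheory

/-! The curve `Γ` has tangent direction `(1 - u κ₀) τ + u_σ ν` in the moving frame `(τ, ν)` of the
reference curve, so its tangent angle is the angle of the reference curve plus
`θ = arctan (u_σ / (1 - u κ₀))`, well defined because `1 - u κ₀ > 0`. Differentiating gives
`κ(u) S(u) = κ₀ + θ_σ`, and `θ` is `L`-periodic, so `∫ κ(u) S(u) = ∫ κ₀ = 2π`. -/

/-- The arc-length element `S(u) = √(u_σ² + (1 - u·κ0)²)` of the normal graph `u` over a
reference curve with curvature `κ0`. -/
noncomputable def arcEl (κ0 u : ℝ → ℝ) (σ : ℝ) : ℝ :=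
  Real.sqrt ((deriv u σ)^2 + (1 - u σ * κ0 σ)^2)

/-- The signed curvature `κ(u)` of the normal graph `u` over a reference curve with
curvature `κ0`. -/
noncomputable def curvOf (κ0 u : ℝ → ℝ) (σ : ℝ) : ℝ :=
  ((1 - u σ * κ0 σ) * deriv (deriv u) σ + 2 * κ0 σ * (deriv u σ)^2
      + deriv κ0 σ * deriv u σ * u σ + κ0 σ * (1 - u σ * κ0 σ)^2) / (arcEl κ0 u σ)^3

theorem Function.Periodic.deriv {f : ℝ → ℝ} {c : ℝ} (h : Function.Periodic f c) :
    Function.Periodic (deriv f) c := fun x => by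
  rw [← deriv_comp_add_const, h.funext]

noncomputable def normalAngle (κ0 u : ℝ → ℝ) (σ : ℝ) : ℝ :=
  Real.arctan (deriv u σ / (1 - u σ * κ0 σ))

section NormalGraph

variable {κ0 u : ℝ → ℝ} {σ : ℝ}

theorem arcEl_sq (κ0 u : ℝ → ℝ) (σ : ℝ) :
    arcEl κ0 u σ ^ 2 = deriv u σ ^ 2 + (1 - u σ * κ0 σ) ^ 2 :=
  Real.sq_sqrt (by positivity)

theorem arcEl_pos (h : 1 - u σ * κ0 σ ≠ 0) : 0 < arcEl κ0 u σ :=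
  Real.sqrt_pos.mpr (by positivity)

theorem curvOf_mul_arcEl (h : 1 - u σ * κ0 σ ≠ 0) :
    curvOf κ0 u σ * arcEl κ0 u σ = κ0 σ +
      (deriv (deriv u) σ * (1 - u σ * κ0 σ)
          + deriv u σ * (deriv u σ * κ0 σ + u σ * deriv κ0 σ))
        / ((1 - u σ * κ0 σ) ^ 2 + deriv u σ ^ 2) := by
  have hS := arcEl_pos h
  have hS3 : arcEl κ0 u σ ^ 3 = arcEl κ0 u σ * ((1 - u σ * κ0 σ) ^ 2 + deriv u σ ^ 2) := by
    rw [pow_succ', arcEl_sq]; ring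
  rw [curvOf, hS3]
  field_simp
  ring

theorem hasDerivAt_normalAngle (hu : DifferentiableAt ℝ u σ)
    (hu' : DifferentiableAt ℝ (deriv u) σ) (hκ : DifferentiableAt ℝ κ0 σ)
    (h : 1 - u σ * κ0 σ ≠ 0) :
    HasDerivAt (normalAngle κ0 u) (curvOf κ0 u σ * arcEl κ0 u σ - κ0 σ) σ := by
  have hquot := hu'.hasDerivAt.div ((hu.hasDerivAt.mul hκ.hasDerivAt).const_sub 1) h
  refine ((Real.hasDerivAt_arctan _).comp σ hquot).congr_deriv ?_
  simp only [Pi.div_apply, Pi.mul_apply]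
  rw [curvOf_mul_arcEl h]
  field_simp
  ring

theorem Function.Periodic.normalAngle {L : ℝ} (hu : Function.Periodic u L)
    (hκ : Function.Periodic κ0 L) : Function.Periodic (normalAngle κ0 u) L := fun σ => by
  simp only [_root_.normalAngle, hu σ, hκ σ, hu.deriv σ]

theorem continuous_curvOf_mul_arcEl (hu : ContDiff ℝ 2 u) (hκ : ContDiff ℝ 1 κ0)
    (h : ∀ σ, 1 - u σ * κ0 σ ≠ 0) :
    Continuous fun σ => curvOf κ0 u σ * arcEl κ0 u σ := by
  have hu' := hu.continuous_deriv one_le_two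
  have hu'' := (hu.deriv' (n := 1)).continuous_deriv_one
  have hκ' := hκ.continuous_deriv_one
  have hu := hu.continuous
  have hκ := hκ.continuous
  simp only [curvOf_mul_arcEl (h _)]
  exact hκ.add <| Continuous.div (by fun_prop) (by fun_prop) fun σ => by have := h σ; positivity

end NormalGraph

theorem stmt_3_general (L : ℝ) (κ0 u : ℝ → ℝ)
    (hκreg : ContDiff ℝ 1 κ0) (hκper : Function.Periodic κ0 L)
    (hκint : (∫ σ in (0:ℝ)..L, κ0 σ) = 2 * Real.pi)
    (hureg : ContDiff ℝ 2 u) (huper : Function.Periodic u L)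
    (hsmall : ∃ c < (1:ℝ), ∀ σ, |u σ * κ0 σ| ≤ c) :
    (∫ σ in (0:ℝ)..L, curvOf κ0 u σ * arcEl κ0 u σ) = 2 * Real.pi := by
  obtain ⟨c, hc1, hc⟩ := hsmall
  have hne : ∀ σ, 1 - u σ * κ0 σ ≠ 0 := fun σ => by
    linarith [(abs_le.mp (hc σ)).2]
  have hcont := continuous_curvOf_mul_arcEl hureg hκreg hne
  have hturn := intervalIntegral.integral_eq_sub_of_hasDerivAt
    (fun σ _ => hasDerivAt_normalAngle (hureg.differentiable two_ne_zero σ)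
      (hureg.differentiable_deriv_two σ)
      (hκreg.differentiable one_ne_zero σ) (hne σ))
    ((hcont.sub hκreg.continuous).intervalIntegrable 0 L)
  rw [(huper.normalAngle hκper).eq, sub_self, intervalIntegral.integral_sub
    (hcont.intervalIntegrable 0 L) (hκreg.continuous.intervalIntegrable 0 L), sub_eq_zero] at hturn
  rw [hturn, hκint]

/-- Gauss–Bonnet identity `∫ κ(u)·S(u) dσ = 2π` for an L-periodic C² normal
graph `u` over a C¹ reference curve of length `L`, total curvature `2π`, with
`sup|u·κ0| < 1`. -/
theorem stmt_3 (L : ℝ) (hL : 0 < L) (κ0 u : ℝ → ℝ)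
    (hκreg : ContDiff ℝ 1 κ0) (hκper : Function.Periodic κ0 L)
    (hκint : (∫ σ in (0:ℝ)..L, κ0 σ) = 2 * Real.pi)
    (hureg : ContDiff ℝ 2 u) (huper : Function.Periodic u L)
    (hsmall : ∃ c < (1:ℝ), ∀ σ, |u σ * κ0 σ| ≤ c) :
    (∫ σ in (0:ℝ)..L, curvOf κ0 u σ * arcEl κ0 u σ) = 2 * Real.pi :=
  stmt_3_general L κ0 u hκreg hκper hκint hureg huper hsmall
end
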